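/- arXiv:math/0612240 — 4 statements merged into one kernel-verified Lean document; each statement's English description precedes it below -/
import Mathlib

section
/- Let 𝒜 be a family of infinite subsets of ℕ and B ⊆ ℕ. Then B is infinite and B ∉ Id_𝒜 if and only if there is a nonprincipal ultrafilter D on ℕ such that B ∈ D and 𝒜 is a π-base of D. -/
/-- `A ⊆* B`: almost inclusion, i.e. `A \ B` is finite. -/
def AlmostSubset (A B : Set ℕ) : Prop := (A \ B).Finite

/-- `P : Fin n → Set ℕ` is a partition of `B` into pairwise disjoint sets. -/
def IsPartitionOf (B : Set ℕ) (n : ℕ) (P : Fin n → Set ℕ) : Prop :=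
  (⋃ i, P i) = B ∧ ∀ i j : Fin n, i ≠ j → Disjoint (P i) (P j)

/-- The ideal `Id_𝒜`. -/
def IdA (𝒜 : Set (Set ℕ)) : Set (Set ℕ) :=
  {B | ∃ n : ℕ, ∃ P : Fin n → Set ℕ, IsPartitionOf B n P ∧
    ∀ A ∈ 𝒜, ∀ i : Fin n, ¬ AlmostSubset A (P i)}

/-- `𝒜` is a π-base of the ultrafilter `D`. -/
def IsPiBaseOf (𝒜 : Set (Set ℕ)) (D : Ultrafilter ℕ) : Prop :=
  ∀ B ∈ D, ∃ A ∈ 𝒜, AlmostSubset A B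

lemma almostSubset_mono {A C C' : Set ℕ} (h : AlmostSubset A C) (h2 : C ⊆ C') :
    AlmostSubset A C' :=
  h.subset (Set.diff_subset_diff_right h2)

lemma finite_mem_IdA (𝒜 : Set (Set ℕ)) (h𝒜 : ∀ A ∈ 𝒜, A.Infinite) {s : Set ℕ}
    (hs : s.Finite) : s ∈ IdA 𝒜 := by
  refine ⟨1, fun _ => s, ⟨Set.iUnion_const s, ?_⟩, ?_⟩
  · intro i j hij; exact absurd (Subsingleton.elim i j) hij
  · intro A hA i hAs
    exact h𝒜 A hA (((hAs.union hs).subset (by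
      intro x hx
      by_cases hxs : x ∈ s
      · exact Or.inr hxs
      · exact Or.inl ⟨hx, hxs⟩)))

lemma IdA_subset {𝒜 : Set (Set ℕ)} {C C' : Set ℕ} (hC : C ∈ IdA 𝒜) (h : C' ⊆ C) :
    C' ∈ IdA 𝒜 := by
  obtain ⟨n, P, ⟨hcov, hdisj⟩, hno⟩ := hC
  refine ⟨n, fun i => P i ∩ C', ⟨?_, ?_⟩, ?_⟩
  · rw [← Set.iUnion_inter, hcov, Set.inter_eq_right.mpr h]
  · intro i j hij
    exact ((hdisj i j hij).mono Set.inter_subset_left Set.inter_subset_left)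
  · intro A hA i hAs
    exact hno A hA i (hAs.subset (Set.diff_subset_diff_right Set.inter_subset_left))

lemma IdA_union {𝒜 : Set (Set ℕ)} {C C' : Set ℕ} (hC : C ∈ IdA 𝒜) (hC' : C' ∈ IdA 𝒜) :
    C ∪ C' ∈ IdA 𝒜 := by
  obtain ⟨n, P, ⟨hcov, hdisj⟩, hno⟩ := hC
  obtain ⟨m, Q, ⟨hcov', hdisj'⟩, hno'⟩ := IdA_subset hC' (Set.diff_subset : C' \ C ⊆ C')
  refine ⟨n + m, fun i => Sum.elim P Q (finSumFinEquiv.symm i), ⟨?_, ?_⟩, ?_⟩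
  · ext x
    simp only [Set.mem_iUnion, Set.mem_union]
    constructor
    · rintro ⟨i, hx⟩
      rcases h : finSumFinEquiv.symm i with a | a <;> simp only [h, Sum.elim_inl, Sum.elim_inr] at hx
      · left; rw [← hcov]; exact Set.mem_iUnion.2 ⟨a, hx⟩
      · right
        have := Set.mem_iUnion.2 ⟨a, hx⟩
        rw [hcov'] at this; exact this.1
    · intro hx
      by_cases hxC : x ∈ C
      · rw [← hcov] at hxC
        obtain ⟨a, ha⟩ := Set.mem_iUnion.1 hxC
        exact ⟨finSumFinEquiv (Sum.inl a), by simpa using ha⟩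
      · have hx' : x ∈ C' \ C := ⟨hx.resolve_left hxC, hxC⟩
        rw [← hcov'] at hx'
        obtain ⟨a, ha⟩ := Set.mem_iUnion.1 hx'
        exact ⟨finSumFinEquiv (Sum.inr a), by simpa using ha⟩
  · intro i j hij
    have hij' : finSumFinEquiv.symm i ≠ finSumFinEquiv.symm j := fun h => hij (by
      simpa using congrArg finSumFinEquiv h)
    rcases hs : finSumFinEquiv.symm i with a | a <;> rcases ht : finSumFinEquiv.symm j with b | b <;>
      rw [hs, ht] at hij' <;> simp only [hs, ht, Sum.elim_inl, Sum.elim_inr]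
    · exact hdisj a b (fun h => hij' (by rw [h]))
    · have h1 : P a ⊆ C := by rw [← hcov]; exact Set.subset_iUnion _ a
      have h2 : Q b ⊆ C' \ C := by rw [← hcov']; exact Set.subset_iUnion _ b
      exact Set.disjoint_of_subset h1 h2 Set.disjoint_sdiff_right
    · have h1 : P b ⊆ C := by rw [← hcov]; exact Set.subset_iUnion _ b
      have h2 : Q a ⊆ C' \ C := by rw [← hcov']; exact Set.subset_iUnion _ a
      exact Set.disjoint_of_subset h2 h1 Set.disjoint_sdiff_left
    · exact hdisj' a b (fun h => hij' (by rw [h]))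
  · intro A hA i
    rcases hs : finSumFinEquiv.symm i with a | a <;> simp only [hs, Sum.elim_inl, Sum.elim_inr]
    · exact hno A hA a
    · exact hno' A hA a

theorem mem_IdA_iff_ultrafilter (𝒜 : Set (Set ℕ)) (h𝒜 : ∀ A ∈ 𝒜, A.Infinite) (B : Set ℕ) :
    (B.Infinite ∧ B ∉ IdA 𝒜) ↔
      ∃ D : Ultrafilter ℕ, (∀ s : Set ℕ, s.Finite → s ∉ D) ∧ B ∈ D ∧ IsPiBaseOf 𝒜 D := by
  constructor
  · rintro ⟨hBinf, hBId⟩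
    set F : Filter ℕ :=
      { sets := {C | B \ C ∈ IdA 𝒜}
        univ_sets := by simpa using finite_mem_IdA 𝒜 h𝒜 (Set.finite_empty)
        sets_of_superset := fun hC hsub =>
          IdA_subset hC (Set.diff_subset_diff_right hsub)
        inter_sets := fun {C C'} hC hC' => by
          have : B \ (C ∩ C') = (B \ C) ∪ (B \ C') := Set.diff_inter
          exact Set.mem_setOf_eq ▸ (this ▸ IdA_union hC hC') } with hF
    have memF : ∀ C : Set ℕ, C ∈ F ↔ B \ C ∈ IdA 𝒜 := fun C => Iff.rfl
    have : F.NeBot := by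
      constructor
      intro hbot
      have : (∅ : Set ℕ) ∈ F := hbot ▸ Filter.mem_bot
      rw [memF, Set.diff_empty] at this
      exact hBId this
    obtain ⟨D, hD⟩ := Ultrafilter.exists_le F
    refine ⟨D, ?_, ?_, ?_⟩
    · intro s hs hsD
      have : sᶜ ∈ F := by rw [memF]; exact finite_mem_IdA 𝒜 h𝒜 (hs.subset (fun x hx => not_not.mp hx.2))
      exact (Ultrafilter.compl_notMem_iff.mpr hsD) (hD this)
    · exact hD (by rw [memF, Set.diff_self]; exact finite_mem_IdA 𝒜 h𝒜 Set.finite_empty)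
    · intro C hC
      have hCc : Cᶜ ∉ F := fun h => (Ultrafilter.compl_notMem_iff.mpr hC) (hD h)
      rw [memF] at hCc
      have hBC : B ∩ C ∉ IdA 𝒜 := by
        rwa [Set.diff_compl] at hCc
      have : ∃ A ∈ 𝒜, AlmostSubset A (B ∩ C) := by
        by_contra hno
        push_neg at hno
        exact hBC ⟨1, fun _ => B ∩ C, ⟨Set.iUnion_const _, fun i j hij =>
          absurd (Subsingleton.elim i j) hij⟩, fun A hA _ => hno A hA⟩
      obtain ⟨A, hA, hAs⟩ := this
      exact ⟨A, hA, almostSubset_mono hAs Set.inter_subset_right⟩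
  · rintro ⟨D, hnp, hBD, hpi⟩
    constructor
    · intro hBfin
      exact hnp B hBfin hBD
    · rintro ⟨n, P, ⟨hcov, hdisj⟩, hno⟩
      have hmem : (⋃ i ∈ (Set.univ : Set (Fin n)), P i) ∈ D := by
        simpa [hcov] using hBD
      obtain ⟨i, -, hPi⟩ := (Ultrafilter.finite_biUnion_mem_iff Set.finite_univ).mp hmem
      obtain ⟨A, hA, hAs⟩ := hpi (P i) hPi
      exact hno A hA i hAs
end

section
/- Let 𝒜 be a family of infinite subsets of ℕ. Then 𝒜 is a π-base (i.e., 𝒜 is a π-base of some ultrafilter on ℕ) if and only if ℕ ∉ Id_𝒜. -/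
lemma IdA_empty (𝒜 : Set (Set ℕ)) : (∅ : Set ℕ) ∈ IdA 𝒜 :=
  ⟨0, Fin.elim0, ⟨by simp, fun i => i.elim0⟩, fun A _ i => i.elim0⟩

lemma IdA_mono (𝒜 : Set (Set ℕ)) : ∀ t ∈ IdA 𝒜, ∀ s ⊆ t, s ∈ IdA 𝒜 := by
  rintro t ⟨n, P, ⟨hU, hD⟩, hA⟩ s hst
  refine ⟨n, fun i => P i ∩ s, ⟨?_, ?_⟩, ?_⟩
  · rw [← Set.iUnion_inter, hU, Set.inter_eq_right.2 hst]
  · exact fun i j hij => ((hD i j hij).mono (Set.inter_subset_left) (Set.inter_subset_left))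
  · intro A hA' i h
    exact hA A hA' i (h.subset (Set.diff_subset_diff_right Set.inter_subset_left))

lemma IdA_union_s2 (𝒜 : Set (Set ℕ)) : ∀ s ∈ IdA 𝒜, ∀ t ∈ IdA 𝒜, s ∪ t ∈ IdA 𝒜 := by
  intro s hs t ht
  obtain ⟨n, P, ⟨hPU, hPD⟩, hPA⟩ := hs
  obtain ⟨m, Q, ⟨hQU, hQD⟩, hQA⟩ := IdA_mono 𝒜 t ht (t \ s) Set.diff_subset
  refine ⟨n + m, fun i => Sum.elim P Q (finSumFinEquiv.symm i), ⟨?_, ?_⟩, ?_⟩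
  · rw [finSumFinEquiv.symm.surjective.iUnion_comp (g := Sum.elim P Q), Set.iUnion_sum]
    simp only [Sum.elim_inl, Sum.elim_inr, hPU, hQU]
    rw [Set.union_diff_self]
  · intro i j hij
    have hij' : finSumFinEquiv.symm i ≠ finSumFinEquiv.symm j := fun h => hij (by
      simpa using congrArg finSumFinEquiv h)
    have hPs : ∀ k, P k ⊆ s := fun k => hPU ▸ Set.subset_iUnion P k
    have hQt : ∀ k, Q k ⊆ t \ s := fun k => hQU ▸ Set.subset_iUnion Q k
    show Disjoint (Sum.elim P Q (finSumFinEquiv.symm i)) (Sum.elim P Q (finSumFinEquiv.symm j))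
    rcases hsi : finSumFinEquiv.symm i with a | a <;>
      rcases hsj : finSumFinEquiv.symm j with b | b <;>
      rw [hsi, hsj] at hij' <;> simp only [Sum.elim_inl, Sum.elim_inr]
    · exact hPD a b (by simpa using hij')
    · exact (Set.disjoint_sdiff_left.mono (hQt b) (hPs a)).symm
    · exact Set.disjoint_sdiff_left.mono (hQt a) (hPs b)
    · exact hQD a b (by simpa using hij')
  · intro A hA i
    show ¬ AlmostSubset A (Sum.elim P Q (finSumFinEquiv.symm i))
    rcases hsi : finSumFinEquiv.symm i with a | a <;> simp only [Sum.elim_inl, Sum.elim_inr]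
    · exact hPA A hA a
    · exact hQA A hA a

theorem piBase_iff_univ_not_mem_IdA (𝒜 : Set (Set ℕ)) (h𝒜 : ∀ A ∈ 𝒜, A.Infinite) :
    (∃ D : Ultrafilter ℕ, IsPiBaseOf 𝒜 D) ↔ (Set.univ : Set ℕ) ∉ IdA 𝒜 := by
  constructor
  · rintro ⟨D, hD⟩ ⟨n, P, ⟨hU, _⟩, hA⟩
    have hmem : (⋃ i ∈ (Set.univ : Set (Fin n)), P i) ∈ D := by
      rw [Set.biUnion_univ, hU]; exact Filter.univ_mem
    obtain ⟨i, _, hiD⟩ := (Ultrafilter.finite_biUnion_mem_iff Set.finite_univ).mp hmem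
    obtain ⟨A, hAmem, hAsub⟩ := hD (P i) hiD
    exact hA A hAmem i hAsub
  · intro huniv
    set F : Filter ℕ := Filter.comk (· ∈ IdA 𝒜) (IdA_empty 𝒜) (IdA_mono 𝒜) (IdA_union_s2 𝒜)
    have hF : F.NeBot := by
      refine ⟨fun hbot => huniv ?_⟩
      have : (∅ : Set ℕ) ∈ F := hbot ▸ Filter.mem_bot
      simpa using (Filter.mem_comk.mp this)
    refine ⟨Ultrafilter.of F, fun B hB => ?_⟩
    by_contra h
    push_neg at h
    have hBIdA : B ∈ IdA 𝒜 := by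
      refine ⟨1, fun _ => B, ⟨Set.iUnion_const B, fun i j hij => absurd (Subsingleton.elim i j) hij⟩, ?_⟩
      exact fun A hA _ => h A hA
    have hBc : Bᶜ ∈ F := Filter.compl_mem_comk.mpr hBIdA
    exact Ultrafilter.compl_notMem_iff.mpr hB (Ultrafilter.of_le F hBc)
end

section
/- The minimum of the cardinals |𝒜|, as 𝒜 ranges over all π-bases (families of infinite subsets of ℕ that are a π-base of some ultrafilter on ℕ), equals the minimum of the cardinals |𝒜|, as 𝒜 ranges over all strict π-bases; in particular, strict π-bases exist. -/
/-- `𝒜` is a strict π-base: a π-base no subset of which of smaller cardinality is a π-base. -/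
def IsStrictPiBase (𝒜 : Set (Set ℕ)) : Prop :=
  (∀ A ∈ 𝒜, A.Infinite) ∧ (∃ D : Ultrafilter ℕ, IsPiBaseOf 𝒜 D) ∧
  ∀ ℬ ⊆ 𝒜, Cardinal.mk ℬ < Cardinal.mk 𝒜 → ¬ ∃ D : Ultrafilter ℕ, IsPiBaseOf ℬ D

theorem min_piBase_eq_min_strictPiBase :
    (∃ 𝒜 : Set (Set ℕ), IsStrictPiBase 𝒜) ∧
    sInf {c : Cardinal | ∃ 𝒜 : Set (Set ℕ), (∀ A ∈ 𝒜, A.Infinite) ∧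
        (∃ D : Ultrafilter ℕ, IsPiBaseOf 𝒜 D) ∧ c = Cardinal.mk 𝒜} =
      sInf {c : Cardinal | ∃ 𝒜 : Set (Set ℕ), IsStrictPiBase 𝒜 ∧ c = Cardinal.mk 𝒜} := by
  set S := {c : Cardinal | ∃ 𝒜 : Set (Set ℕ), (∀ A ∈ 𝒜, A.Infinite) ∧
      (∃ D : Ultrafilter ℕ, IsPiBaseOf 𝒜 D) ∧ c = Cardinal.mk 𝒜} with hS
  have hSne : S.Nonempty := by
    refine ⟨Cardinal.mk {A : Set ℕ | A.Infinite}, {A | A.Infinite}, fun A hA => hA,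
      ⟨Ultrafilter.of Filter.cofinite, ?_⟩, rfl⟩
    intro B hB
    have hBinf : B.Infinite := by
      by_contra h
      rw [Set.not_infinite] at h
      have hc : Bᶜ ∈ Ultrafilter.of Filter.cofinite :=
        Ultrafilter.of_le Filter.cofinite (by rw [Filter.mem_cofinite, compl_compl]; exact h)
      exact (Ultrafilter.compl_mem_iff_notMem.mp hc) hB
    exact ⟨B, hBinf, by simp [AlmostSubset]⟩
  obtain ⟨𝒜, hinf, hD, hcard⟩ := csInf_mem hSne
  have hstrict : IsStrictPiBase 𝒜 := by
    refine ⟨hinf, hD, ?_⟩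
    rintro ℬ hsub hlt ⟨D, hDB⟩
    have hmem : Cardinal.mk ℬ ∈ S := ⟨ℬ, fun A hA => hinf A (hsub hA), ⟨D, hDB⟩, rfl⟩
    have := csInf_le' hmem
    rw [hcard] at this
    exact absurd this (not_le.mpr hlt)
  refine ⟨⟨𝒜, hstrict⟩, le_antisymm ?_ ?_⟩
  · refine csInf_le_csInf (OrderBot.bddBelow _) ⟨Cardinal.mk 𝒜, 𝒜, hstrict, rfl⟩ ?_
    rintro c ⟨𝒞, ⟨h1, h2, _⟩, h3⟩
    exact ⟨𝒞, h1, h2, h3⟩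
  · exact csInf_le' ⟨𝒜, hstrict, hcard⟩
end

section
/- Let D be a nonprincipal ultrafilter on ℕ with character χ(D) = κ. Then there is a sequence ⟨A_ε : ε < κ⟩ of members of D which generates D (i.e., for every B ∈ D there is ε < κ with A_ε ⊆* B) and such that for every ε < κ, neither A_ε nor its complement ℕ ∖ A_ε belongs to the filter on ℕ generated by {A_ζ : ζ < ε} together with all cofinite subsets of ℕ. -/
/-- The character `χ(D)` of an ultrafilter `D` on `ℕ`: the minimal cardinality of a
family `𝒜 ⊆ D` generating `D`. -/
noncomputable def uChar (D : Ultrafilter ℕ) : Cardinal :=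
  sInf {c : Cardinal | ∃ 𝒜 : Set (Set ℕ), (∀ A ∈ 𝒜, A ∈ D) ∧
    (∀ B ∈ D, ∃ A ∈ 𝒜, AlmostSubset A B) ∧ c = Cardinal.mk 𝒜}

/-- `B` belongs to the filter on `ℕ` generated by the collection `𝒮`, i.e. `B` contains
a finite intersection of members of `𝒮`. -/
def InGenFilter (𝒮 : Set (Set ℕ)) (B : Set ℕ) : Prop :=
  ∃ T : Finset (Set ℕ), ↑T ⊆ 𝒮 ∧ ⋂₀ (T : Set (Set ℕ)) ⊆ B

/-! ### Auxiliary lemmas -/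

lemma no_countable_pibase (D : Ultrafilter ℕ)
    (hD : ∀ s : Set ℕ, s.Finite → s ∉ D) (𝒜 : Set (Set ℕ))
    (h1 : ∀ A ∈ 𝒜, A ∈ D) (h2 : ∀ B ∈ D, ∃ A ∈ 𝒜, AlmostSubset A B) :
    ¬ 𝒜.Countable := by
  intro hc
  obtain ⟨A0, hA0, -⟩ := h2 Set.univ Filter.univ_mem
  obtain ⟨c, hcrange⟩ := hc.exists_eq_range ⟨A0, hA0⟩
  have hcD : ∀ n, c n ∈ D := fun n => h1 _ (hcrange ▸ Set.mem_range_self n)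
  set I : ℕ → Set ℕ := fun n => ⋂ k ∈ Finset.range (n+1), c k with hI
  have hID : ∀ n, I n ∈ D := fun n =>
    (Filter.biInter_finset_mem (Finset.range (n+1))).2 fun k _ => hcD k
  have hIinf : ∀ n, (I n).Infinite := fun n h => hD _ h (hID n)
  have hImono : ∀ n m, n ≤ m → I m ⊆ c n := by
    intro n m hnm x hx
    simp only [hI, Set.mem_iInter] at hx
    exact hx n (Finset.mem_range.mpr (Nat.lt_succ_of_le hnm))
  have hgt : ∀ n m : ℕ, ∃ a, a ∈ I n ∧ m < a := fun n m => by
    obtain ⟨a, ha, hma⟩ := (hIinf n).exists_gt m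
    exact ⟨a, ha, hma⟩
  let z : ℕ → ℕ := fun k => Nat.rec (hgt 0 0).choose
    (fun k ih => (hgt ((k+1)/2) ih).choose) k
  have hzI : ∀ k, z k ∈ I (k / 2) := by
    intro k
    cases k with
    | zero => exact (hgt 0 0).choose_spec.1
    | succ k => exact (hgt ((k+1)/2) (z k)).choose_spec.1
  have hzlt : ∀ k, z k < z (k+1) := fun k => (hgt ((k+1)/2) (z k)).choose_spec.2
  have hzmono : StrictMono z := strictMono_nat_of_lt_succ hzlt
  set X : Set ℕ := Set.range (fun n => z (2*n)) with hX
  by_cases hXD : X ∈ D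
  · obtain ⟨A, hA𝒜, hAX⟩ := h2 X hXD
    obtain ⟨n, rfl⟩ : ∃ n, c n = A := by
      have := hcrange ▸ hA𝒜; exact this
    have hS : ((fun m => z (2*m+1)) '' Set.Ici n) ⊆ c n \ X := by
      rintro _ ⟨m, hm, rfl⟩
      constructor
      · have h1 := hzI (2*m+1)
        rw [show (2*m+1)/2 = m from by omega] at h1
        exact hImono n m hm h1
      · rintro ⟨n', hn'⟩
        have hn'' : z (2*n') = z (2*m+1) := hn'
        have : 2*n' = 2*m+1 := hzmono.injective hn''
        omega
    have hSinf : ((fun m => z (2*m+1)) '' Set.Ici n).Infinite :=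
      (Set.Ici_infinite n).image (fun a _ b _ h => by
        have h' : z (2*a+1) = z (2*b+1) := h
        have : 2*a+1 = 2*b+1 := hzmono.injective h'; omega)
    exact hSinf.mono hS hAX
  · have hXcD : Xᶜ ∈ D := Ultrafilter.compl_mem_iff_notMem.mpr hXD
    obtain ⟨A, hA𝒜, hAX⟩ := h2 Xᶜ hXcD
    obtain ⟨n, rfl⟩ : ∃ n, c n = A := by
      have := hcrange ▸ hA𝒜; exact this
    have hS : ((fun m => z (2*m)) '' Set.Ici n) ⊆ c n \ Xᶜ := by
      rintro _ ⟨m, hm, rfl⟩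
      refine ⟨?_, ?_⟩
      · have h1 := hzI (2*m)
        rw [show (2*m)/2 = m from by omega] at h1
        exact hImono n m hm h1
      · simp only [Set.mem_compl_iff, not_not]
        exact ⟨m, rfl⟩
    have hSinf : ((fun m => z (2*m)) '' Set.Ici n).Infinite :=
      (Set.Ici_infinite n).image (fun a _ b _ h => by
        have h' : z (2*a) = z (2*b) := h
        have : 2*a = 2*b := hzmono.injective h'; omega)
    exact hSinf.mono hS hAX

lemma uChar_set_nonempty (D : Ultrafilter ℕ) :
    {c : Cardinal | ∃ 𝒜 : Set (Set ℕ), (∀ A ∈ 𝒜, A ∈ D) ∧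
      (∀ B ∈ D, ∃ A ∈ 𝒜, AlmostSubset A B) ∧ c = Cardinal.mk 𝒜}.Nonempty := by
  refine ⟨_, {A | A ∈ D}, fun A h => h, fun B hB => ⟨B, hB, ?_⟩, rfl⟩
  simp [AlmostSubset]

lemma aleph0_lt_uChar (D : Ultrafilter ℕ)
    (hD : ∀ s : Set ℕ, s.Finite → s ∉ D) : Cardinal.aleph0 < uChar D := by
  by_contra h
  push_neg at h
  obtain ⟨𝒜, h1, h2, h3⟩ := csInf_mem (uChar_set_nonempty D)
  rw [uChar, h3] at h
  exact no_countable_pibase D hD 𝒜 h1 h2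
    (Cardinal.le_aleph0_iff_set_countable.mp h)

lemma exists_outside (D : Ultrafilter ℕ) (huc : Cardinal.aleph0 < uChar D)
    (𝒮 : Set (Set ℕ)) (h𝒮 : ∀ s ∈ 𝒮, s ∈ D) (hcard : Cardinal.mk 𝒮 < uChar D) :
    ∃ C, C ∈ D ∧ ¬ InGenFilter (𝒮 ∪ {s | sᶜ.Finite}) C := by
  classical
  by_contra h
  push_neg at h
  set F : Finset ↥𝒮 → Set ℕ := fun T => ⋂ s ∈ T, (s : Set ℕ) with hF
  set 𝒜 : Set (Set ℕ) := Set.range F with h𝒜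
  have h1 : ∀ A ∈ 𝒜, A ∈ D := by
    rintro _ ⟨T, rfl⟩
    exact (Filter.biInter_finset_mem T).2 fun s _ => h𝒮 s s.2
  have h2 : ∀ B ∈ D, ∃ A ∈ 𝒜, AlmostSubset A B := by
    intro B hB
    obtain ⟨T, hT𝒮, hTB⟩ := h B hB
    refine ⟨F (T.subtype (· ∈ 𝒮)), ⟨_, rfl⟩, ?_⟩
    have hsub : F (T.subtype (· ∈ 𝒮)) \ B ⊆ ⋃ s ∈ T.filter (· ∉ 𝒮), sᶜ := by
      rintro x ⟨hx1, hx2⟩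
      have hnot : x ∉ ⋂₀ (T : Set (Set ℕ)) := fun hh => hx2 (hTB hh)
      simp only [Set.mem_sInter, not_forall] at hnot
      obtain ⟨s, hsT, hxs⟩ := hnot
      have hs𝒮 : s ∉ 𝒮 := by
        intro hmem
        apply hxs
        have : (⟨s, hmem⟩ : ↥𝒮) ∈ T.subtype (· ∈ 𝒮) := by
          simp only [Finset.mem_subtype]; exact hsT
        exact Set.mem_iInter₂.mp hx1 ⟨s, hmem⟩ this
      exact Set.mem_iUnion₂.mpr ⟨s, Finset.mem_filter.mpr ⟨hsT, hs𝒮⟩, hxs⟩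
    refine Set.Finite.subset ?_ hsub
    refine Set.Finite.biUnion (T.filter (· ∉ 𝒮)).finite_toSet ?_
    intro s hs
    rcases Finset.mem_filter.mp hs with ⟨hsT, hs𝒮⟩
    rcases hT𝒮 hsT with h' | h'
    · exact absurd h' hs𝒮
    · exact h'
  have hle : uChar D ≤ Cardinal.mk 𝒜 := csInf_le' ⟨𝒜, h1, h2, rfl⟩
  have hlt : Cardinal.mk 𝒜 < uChar D := by
    have hr : Cardinal.mk 𝒜 ≤ Cardinal.mk (Finset ↥𝒮) := Cardinal.mk_range_le
    rcases finite_or_infinite ↥𝒮 with hfin | hinf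
    · have : Cardinal.mk (Finset ↥𝒮) ≤ Cardinal.aleph0 := Cardinal.mk_le_aleph0
      exact lt_of_le_of_lt (hr.trans this) huc
    · rw [Cardinal.mk_finset_of_infinite] at hr
      exact lt_of_le_of_lt hr hcard
  exact absurd (hle.trans_lt hlt) (lt_irrefl _)

/-! ### The recursive construction -/

open scoped Classical in
noncomputable def seqA (D : Ultrafilter ℕ) (κ : Cardinal)
    (B : Set.Iio κ.ord → Set ℕ) : Ordinal → Set ℕ :=
  WellFounded.fix Ordinal.lt_wf (fun ε ih =>
    if h : ε < κ.ord then
      (if hC : ∃ C, C ∈ D ∧ ¬ InGenFilter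
          ({s | ∃ ζ : Set.Iio κ.ord, ∃ hζ : (ζ : Ordinal) < ε, s = ih ζ hζ}
            ∪ {s | sᶜ.Finite}) C
       then hC.choose else Set.univ) ∩ B ⟨ε, h⟩
    else Set.univ)

open scoped Classical in
lemma seqA_eq' (D : Ultrafilter ℕ) (κ : Cardinal) (B : Set.Iio κ.ord → Set ℕ)
    (ε : Ordinal) : seqA D κ B ε =
    (if h : ε < κ.ord then
      (if hC : ∃ C, C ∈ D ∧ ¬ InGenFilter
          ({s | ∃ ζ : Set.Iio κ.ord, ∃ _ : (ζ : Ordinal) < ε, s = seqA D κ B ζ}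
            ∪ {s | sᶜ.Finite}) C
       then hC.choose else Set.univ) ∩ B ⟨ε, h⟩
    else Set.univ) := by
  rw [seqA]
  exact WellFounded.fix_eq _ _ _

lemma seqA_set_eq (D : Ultrafilter ℕ) (κ : Cardinal) (B : Set.Iio κ.ord → Set ℕ)
    (ε : Ordinal) :
    {s : Set ℕ | ∃ ζ : Set.Iio κ.ord, ∃ _ : (ζ : Ordinal) < ε, s = seqA D κ B ζ}
      = {s | ∃ ζ : Set.Iio κ.ord, (ζ : Ordinal) < ε ∧ s = seqA D κ B ζ} := by
  ext s; constructor
  · rintro ⟨ζ, hζ, rfl⟩; exact ⟨ζ, hζ, rfl⟩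
  · rintro ⟨ζ, hζ, rfl⟩; exact ⟨ζ, hζ, rfl⟩

open scoped Classical in
lemma seqA_eq (D : Ultrafilter ℕ) (κ : Cardinal) (B : Set.Iio κ.ord → Set ℕ)
    (ε : Ordinal) : seqA D κ B ε =
    (if h : ε < κ.ord then
      (if hC : ∃ C, C ∈ D ∧ ¬ InGenFilter
          ({s | ∃ ζ : Set.Iio κ.ord, (ζ : Ordinal) < ε ∧ s = seqA D κ B ζ}
            ∪ {s | sᶜ.Finite}) C
       then hC.choose else Set.univ) ∩ B ⟨ε, h⟩
    else Set.univ) := by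
  rw [seqA_eq', seqA_set_eq]

theorem exists_independent_generating_sequence (D : Ultrafilter ℕ)
    (hD : ∀ s : Set ℕ, s.Finite → s ∉ D) (κ : Cardinal) (hκ : uChar D = κ) :
    ∃ A : Set.Iio κ.ord → Set ℕ,
      (∀ ε, A ε ∈ D) ∧
      (∀ B ∈ D, ∃ ε, AlmostSubset (A ε) B) ∧
      (∀ ε : Set.Iio κ.ord,
        ¬ InGenFilter ({s | ∃ ζ : Set.Iio κ.ord, (ζ : Ordinal) < (ε : Ordinal) ∧ s = A ζ}
            ∪ {s | sᶜ.Finite}) (A ε) ∧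
        ¬ InGenFilter ({s | ∃ ζ : Set.Iio κ.ord, (ζ : Ordinal) < (ε : Ordinal) ∧ s = A ζ}
            ∪ {s | sᶜ.Finite}) ((A ε)ᶜ)) := by
  classical
  subst hκ
  set κ := uChar D with hκdef
  have huc : Cardinal.aleph0 < κ := aleph0_lt_uChar D hD
  obtain ⟨𝒜₀, h1, h2, h3⟩ := csInf_mem (uChar_set_nonempty D)
  -- enumeration of 𝒜₀ by Iio κ.ord
  have hcardIio : Cardinal.mk ↥(Set.Iio κ.ord) = Cardinal.lift.{1} (Cardinal.mk ↥𝒜₀) := by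
    rw [Ordinal.mk_Iio_ordinal, Cardinal.card_ord, hκdef, uChar, h3]
  obtain ⟨e⟩ : Nonempty (↥(Set.Iio κ.ord) ≃ ↥𝒜₀) := by
    rw [← Cardinal.lift_mk_eq', Cardinal.lift_id']
    exact hcardIio
  set B : Set.Iio κ.ord → Set ℕ := fun ε => (e ε : Set ℕ) with hB
  have hBmem : ∀ ε, B ε ∈ 𝒜₀ := fun ε => (e ε).2
  have hBsurj : ∀ a ∈ 𝒜₀, ∃ ε, B ε = a := by
    intro a ha
    exact ⟨e.symm ⟨a, ha⟩, by simp [hB]⟩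
  -- the main invariant
  have main : ∀ ε : Ordinal, ∀ hε : ε < κ.ord,
      seqA D κ B ε ∈ D ∧ seqA D κ B ε ⊆ B ⟨ε, hε⟩ ∧
      ¬ InGenFilter ({s | ∃ ζ : Set.Iio κ.ord, (ζ : Ordinal) < ε ∧ s = seqA D κ B ζ}
          ∪ {s | sᶜ.Finite}) (seqA D κ B ε) := by
    intro ε
    induction ε using Ordinal.induction with
    | h ε IH =>
    intro hε
    set 𝒮0 : Set (Set ℕ) := {s | ∃ ζ : Set.Iio κ.ord, (ζ : Ordinal) < ε ∧ s = seqA D κ B ζ}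
      with h𝒮0
    have h𝒮0D : ∀ s ∈ 𝒮0, s ∈ D := by
      rintro s ⟨ζ, hζε, rfl⟩
      exact (IH ζ hζε ζ.2).1
    have hcard : Cardinal.mk ↥𝒮0 < κ := by
      have hrange : 𝒮0 = Set.range
          (fun p : {ζ : ↥(Set.Iio κ.ord) // (ζ : Ordinal) < ε} => seqA D κ B p.1) := by
        ext s; constructor
        · rintro ⟨ζ, hζ, rfl⟩; exact ⟨⟨ζ, hζ⟩, rfl⟩
        · rintro ⟨⟨ζ, hζ⟩, rfl⟩; exact ⟨ζ, hζ, rfl⟩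
      have hl : Cardinal.lift.{1} (Cardinal.mk ↥𝒮0)
          ≤ Cardinal.mk {ζ : ↥(Set.Iio κ.ord) // (ζ : Ordinal) < ε} := by
        rw [hrange]
        have := Cardinal.mk_range_le_lift
          (f := fun p : {ζ : ↥(Set.Iio κ.ord) // (ζ : Ordinal) < ε} => seqA D κ B p.1)
        rwa [Cardinal.lift_id'] at this
      have hsub : Cardinal.mk {ζ : ↥(Set.Iio κ.ord) // (ζ : Ordinal) < ε}
          ≤ Cardinal.mk ↥(Set.Iio ε) :=
        Cardinal.mk_le_of_injective (f := fun p => ⟨p.1.1, p.2⟩)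
          (fun p q hpq => by
            have h' : (⟨p.1.1, p.2⟩ : ↥(Set.Iio ε)) = ⟨q.1.1, q.2⟩ := hpq
            replace h' := congrArg Subtype.val h'
            exact Subtype.ext (Subtype.ext h'))
      rw [Ordinal.mk_Iio_ordinal] at hsub
      have := (hl.trans hsub)
      rw [Cardinal.lift_le] at this
      exact lt_of_le_of_lt this (Cardinal.lt_ord.mp hε)
    obtain ⟨C, hCD, hCnot⟩ := exists_outside D huc 𝒮0 h𝒮0D hcard
    have hCex : ∃ C, C ∈ D ∧ ¬ InGenFilter (𝒮0 ∪ {s | sᶜ.Finite}) C := ⟨C, hCD, hCnot⟩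
    have heq : seqA D κ B ε = hCex.choose ∩ B ⟨ε, hε⟩ := by
      rw [seqA_eq]
      rw [dif_pos hε, dif_pos hCex]
    refine ⟨?_, ?_, ?_⟩
    · rw [heq]
      exact Filter.inter_mem hCex.choose_spec.1 (h1 _ (hBmem ⟨ε, hε⟩))
    · rw [heq]; exact Set.inter_subset_right
    · rw [heq]
      rintro ⟨T, hT, hTsub⟩
      exact hCex.choose_spec.2 ⟨T, hT, hTsub.trans Set.inter_subset_left⟩
  -- assemble
  refine ⟨fun ε => seqA D κ B ε, ?_, ?_, ?_⟩
  · intro ε; exact (main ε ε.2).1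
  · intro S hS
    obtain ⟨a, ha, haS⟩ := h2 S hS
    obtain ⟨ε, hεa⟩ := hBsurj a ha
    refine ⟨ε, ?_⟩
    have hsub : seqA D κ B ε ⊆ a := by
      have := (main ε ε.2).2.1
      rwa [Subtype.coe_eta, hεa] at this
    exact haS.subset (fun x hx => ⟨hsub hx.1, hx.2⟩)
  · intro ε
    have hmem : ∀ X, InGenFilter ({s | ∃ ζ : Set.Iio κ.ord,
        (ζ : Ordinal) < (ε : Ordinal) ∧ s = seqA D κ B ζ} ∪ {s | sᶜ.Finite}) X → X ∈ D := by
      rintro X ⟨T, hT, hTsub⟩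
      have hTD : ∀ t ∈ (T : Set (Set ℕ)), t ∈ D := by
        intro t ht
        rcases hT ht with h' | h'
        · obtain ⟨ζ, hζ, rfl⟩ := h'
          exact (main ζ ζ.2).1
        · exact Ultrafilter.compl_notMem_iff.mp (hD _ h')
      exact Filter.mem_of_superset ((Filter.sInter_mem T.finite_toSet).mpr hTD) hTsub
    constructor
    · exact (main ε ε.2).2.2
    · intro hcompl
      have h1' : (seqA D κ B ε)ᶜ ∈ D := hmem _ hcompl
      have h2' : seqA D κ B ε ∈ D := (main ε ε.2).1
      have : (∅ : Set ℕ) ∈ D := by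
        have := Filter.inter_mem h2' h1'
        rwa [Set.inter_compl_self] at this
      exact hD ∅ Set.finite_empty this
end
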